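/- Let (α_1,u_1) < ⋯ < (α_n,u_n) be a strictly increasing sequence of bypasses in Q, let τ_1,…,τ_n ∈ k^*, and set ψ := φ_{α_n,u_n,τ_n} ∘ ⋯ ∘ φ_{α_1,u_1,τ_1}. Then for every arrow α of Q, ψ(α) = α + Σ_{i such that α_i = α} τ_i u_i, and this expression is a normal form: the paths u_i with α_i = α are pairwise distinct and all distinct from α. -/

import Mathlib

attribute [local instance] Classical.propDecidable

/-- A quiver given by a set of vertices, a set of arrows and source/target maps. -/
structure Quiv where
  V : Type
  A : Type
  s : A → V
  t : A → V

namespace Quiv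

section Basic

variable (Q : Quiv)

/-- A (nontrivial) path is a nonempty list of composable arrows, listed in the
order they are traversed. -/
def IsPath (p : List Q.A) : Prop :=
  p ≠ [] ∧ p.Chain' (fun a b => Q.t a = Q.s b)

/-- Source of a nonempty list of arrows. -/
def src (p : List Q.A) : Option Q.V := p.head?.map Q.s

/-- Target of a nonempty list of arrows. -/
def tgt (p : List Q.A) : Option Q.V := p.getLast?.map Q.t

/-- `Q` has no oriented cycle: no nontrivial path has equal source and target. -/
def NoCycle : Prop := ∀ p, Q.IsPath p → Q.src p ≠ Q.tgt p

/-- `Q` has no multiple arrows: distinct arrows never have both the same source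
and the same target. -/
def NoMultipleArrows : Prop :=
  ∀ a b : Q.A, Q.s a = Q.s b → Q.t a = Q.t b → a = b

/-- A bypass `(α, u)`: `u` is a path parallel to the arrow `α` and distinct from it. -/
def IsBypass (α : Q.A) (u : List Q.A) : Prop :=
  Q.IsPath u ∧ Q.src u = some (Q.s α) ∧ Q.tgt u = some (Q.t α) ∧ u ≠ [α]

/-- `Repl n u v` : `v` is obtained from `u` by replacing `n` of its arrows (at
increasing positions) by bypass paths. -/
inductive Repl : ℕ → List Q.A → List Q.A → Prop
  | nil : Repl 0 [] []
  | keep (a : Q.A) {n : ℕ} {u v : List Q.A} : Repl n u v → Repl n (a :: u) (a :: v)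
  | repl {a : Q.A} {p : List Q.A} {n : ℕ} {u v : List Q.A} :
      Q.IsBypass a p → Repl n u v → Repl (n + 1) (a :: u) (p ++ v)

/-- `v` is derived of `u` of order `t`. -/
def DerivedOfOrder (t : ℕ) (u v : List Q.A) : Prop := 1 ≤ t ∧ Q.Repl t u v

/-- `v` is derived of `u` (of some order `t ≥ 1`). -/
def Derived (u v : List Q.A) : Prop := ∃ t, Q.DerivedOfOrder t u v

/-- `W(α)` : the number of bypasses of the form `(α, u)`. -/
noncomputable def Wa (α : Q.A) : ℕ := Nat.card {u : List Q.A // Q.IsBypass α u}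

/-- `W(u)` for a path `u = α_n ⋯ α_1` : the sum of the `W(α_i)`. -/
noncomputable def Wp (u : List Q.A) : ℕ := (u.map Q.Wa).sum

/-- A linear order `<` on the nontrivial paths of `Q` refining the `W`-ordering and
compatible with concatenation, as in Le Meur's Definition 2.5. -/
structure PathOrder where
  lt : List Q.A → List Q.A → Prop
  irrefl : ∀ p, Q.IsPath p → ¬ lt p p
  trans' : ∀ p q r, lt p q → lt q r → lt p r
  total' : ∀ p q, Q.IsPath p → Q.IsPath q → p ≠ q → lt p q ∨ lt q p
  wlt : ∀ p q, Q.IsPath p → Q.IsPath q → Q.Wp p < Q.Wp q → lt p q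
  concat : ∀ u u' v v' : List Q.A, lt v u → lt v' u' →
    Q.IsPath (v ++ v') → Q.IsPath (u ++ u') → lt (v ++ v') (u ++ u')

end Basic

/-- Lexicographic (strict) order on bypasses: `(α,u) < (β,v)` iff `α < β`, or
`α = β` and `u < v`. -/
def PathOrder.bplt {Q : Quiv} (o : Q.PathOrder) (b c : Q.A × List Q.A) : Prop :=
  o.lt [b.1] [c.1] ∨ (b.1 = c.1 ∧ o.lt b.2 c.2)

/-- Lexicographic non-strict order on bypasses. -/
def PathOrder.bple {Q : Quiv} (o : Q.PathOrder) (b c : Q.A × List Q.A) : Prop :=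
  o.bplt b c ∨ b = c

section Linear

variable (Q : Quiv) (k : Type) [Field k]

/-- Concatenation product on the free `k`-module on lists of arrows (the morphism
spaces of the path category `kQ`). -/
noncomputable def mulF (f g : List Q.A →₀ k) : List Q.A →₀ k :=
  f.sum fun p c => g.sum fun q d => Finsupp.single (p ++ q) (c * d)

/-- Image of the arrow `a` under the transvection `φ_{α,u,τ}`. -/
noncomputable def arrowImg (α : Q.A) (u : List Q.A) (τ : k) (a : Q.A) : List Q.A →₀ k :=
  if a = α then Finsupp.single [a] 1 + τ • Finsupp.single u 1 else Finsupp.single [a] 1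

/-- Image of a path under the transvection `φ_{α,u,τ}`. -/
noncomputable def substPoly (α : Q.A) (u : List Q.A) (τ : k) : List Q.A → (List Q.A →₀ k)
  | [] => Finsupp.single [] 1
  | a :: rest => mulF Q k (arrowImg Q k α u τ a) (substPoly α u τ rest)

/-- The transvection `φ_{α,u,τ}` as a linear endomorphism of `kQ` : it is the
`k`-linear automorphism of `kQ` fixing every vertex, sending `α` to `α + τ u`, and
fixing every other arrow. -/
noncomputable def substMap (α : Q.A) (u : List Q.A) (τ : k) :
    Module.End k (List Q.A →₀ k) :=
  Finsupp.linearCombination k (substPoly Q k α u τ)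

/-- `ψ` lies in the group `T` generated by the transvections, i.e. it is a finite
product of transvections. -/
def MemT (ψ : Module.End k (List Q.A →₀ k)) : Prop :=
  ∃ L : List (Q.A × List Q.A × k),
    (∀ x ∈ L, Q.IsBypass x.1 x.2.1) ∧
    ψ = (L.map fun x => substMap Q k x.1 x.2.1 x.2.2).prod

/-- `r'` is a subexpression of `r`. -/
def Subexpr (r' r : List Q.A →₀ k) : Prop :=
  r'.support ⊆ r.support ∧ ∀ p ∈ r'.support, r' p = r p

/-- A minimal relation of `I` : a nonzero `r ∈ I` such that `0` and `r` are the only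
subexpressions of `r` lying in `I`. -/
def IsMinimalRel (I : Submodule k (List Q.A →₀ k)) (r : List Q.A →₀ k) : Prop :=
  r ∈ I ∧ r ≠ 0 ∧ ∀ r', Subexpr Q k r' r → r' ∈ I → r' = 0 ∨ r' = r

/-- `ReplExp g u v c` : `v` is obtained from the path `u` by replacing some of its
arrows `a` (at increasing positions) by paths `w ∈ supp(g a)`, `w ≠ a`, and `c` is
the product of the corresponding coefficients `w^*(g a)`. -/
inductive ReplExp (g : Q.A → (List Q.A →₀ k)) : List Q.A → List Q.A → k → Prop
  | nil : ReplExp g [] [] 1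
  | keep (a : Q.A) {u v : List Q.A} {c : k} :
      ReplExp g u v c → ReplExp g (a :: u) (a :: v) c
  | repl (a : Q.A) {w u v : List Q.A} {c : k} :
      w ∈ (g a).support → w ≠ [a] → ReplExp g u v c →
      ReplExp g (a :: u) (w ++ v) ((g a) w * c)

/-- The homotopy relation `∼_I` on walks. A walk is a list of pairs `(a, d)` where
`a` is an arrow and `d` is `true` for `a` and `false` for the formal inverse `a⁻¹`;
the relation is the smallest equivalence relation compatible with concatenation,
cancelling `a a⁻¹` and `a⁻¹ a`, and identifying any two paths lying in the support
of a minimal relation of `I`. -/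
inductive Homotopic (I : Submodule k (List Q.A →₀ k)) :
    List (Q.A × Bool) → List (Q.A × Bool) → Prop
  | refl (w : List (Q.A × Bool)) : Homotopic I w w
  | symm {w w' : List (Q.A × Bool)} : Homotopic I w w' → Homotopic I w' w
  | trans {w w' w'' : List (Q.A × Bool)} :
      Homotopic I w w' → Homotopic I w' w'' → Homotopic I w w''
  | cancel (a : Q.A) : Homotopic I [(a, true), (a, false)] []
  | cancel' (a : Q.A) : Homotopic I [(a, false), (a, true)] []
  | rel {r : List Q.A →₀ k} (hr : IsMinimalRel Q k I r) {u v : List Q.A}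
      (hu : u ∈ r.support) (hv : v ∈ r.support) :
      Homotopic I (u.map fun a => (a, true)) (v.map fun a => (a, true))
  | congr (w x : List (Q.A × Bool)) {v v' : List (Q.A × Bool)} :
      Homotopic I v v' → Homotopic I (w ++ v ++ x) (w ++ v' ++ x)

/-- `I` is a monomial admissible ideal of `kQ` : every element is a combination of
paths of length `≥ 2`, membership is detected on supports (monomiality), and `I`
is stable under concatenation with paths on either side. -/
def IsMonomialAdmissible (I : Submodule k (List Q.A →₀ k)) : Prop :=
  (∀ r ∈ I, ∀ p ∈ (r : List Q.A →₀ k).support, Q.IsPath p ∧ 2 ≤ p.length) ∧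
  (∀ r : List Q.A →₀ k, (∀ p ∈ r.support, Finsupp.single p (1 : k) ∈ I) → r ∈ I) ∧
  (∀ r ∈ I, ∀ p ∈ (r : List Q.A →₀ k).support, Finsupp.single p (1 : k) ∈ I) ∧
  (∀ p q : List Q.A, Q.IsPath p → Finsupp.single q (1 : k) ∈ I → Q.IsPath (p ++ q) →
    Finsupp.single (p ++ q) (1 : k) ∈ I) ∧
  (∀ p q : List Q.A, Finsupp.single p (1 : k) ∈ I → Q.IsPath q → Q.IsPath (p ++ q) →
    Finsupp.single (p ++ q) (1 : k) ∈ I)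

/-- A `k`-linear automorphism of `kQ` (fixing the vertices) is the transvection
`φ_{α,u,τ}` when its underlying linear map is `substMap α u τ`. -/
def IsTransvectionE (ψ : (List Q.A →₀ k) ≃ₗ[k] (List Q.A →₀ k))
    (α : Q.A) (u : List Q.A) (τ : k) : Prop :=
  (ψ : (List Q.A →₀ k) →ₗ[k] (List Q.A →₀ k)) = substMap Q k α u τ

/-- The subgroup `T_{<(α,u)}` generated by the transvections `φ_{β,v,τ}` with
`(β,v) < (α,u)`. -/
noncomputable def TltSub (o : Q.PathOrder) (b : Q.A × List Q.A) :
    Subgroup ((List Q.A →₀ k) ≃ₗ[k] (List Q.A →₀ k)) :=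
  Subgroup.closure
    {ψ | ∃ β v τ, Q.IsBypass β v ∧ o.bplt (β, v) b ∧ IsTransvectionE Q k ψ β v τ}

/-- The subgroup `T_{≤(α,u)}` generated by the transvections `φ_{β,v,τ}` with
`(β,v) ≤ (α,u)`. -/
noncomputable def TleSub (o : Q.PathOrder) (b : Q.A × List Q.A) :
    Subgroup ((List Q.A →₀ k) ≃ₗ[k] (List Q.A →₀ k)) :=
  Subgroup.closure
    {ψ | ∃ β v τ, Q.IsBypass β v ∧ o.bple (β, v) b ∧ IsTransvectionE Q k ψ β v τ}

/-- The set `T_{(α,u)} = {φ_{α,u,τ} | τ ∈ k}`. -/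
def TsingleSet (b : Q.A × List Q.A) :
    Set ((List Q.A →₀ k) ≃ₗ[k] (List Q.A →₀ k)) :=
  {ψ | ∃ τ : k, IsTransvectionE Q k ψ b.1 b.2 τ}

/-- `m` is the `<`-maximum of the support of `r`. -/
def IsMaxPath (o : Q.PathOrder) (r : List Q.A →₀ k) (m : List Q.A) : Prop :=
  m ∈ r.support ∧ ∀ p ∈ r.support, p ≠ m → o.lt p m

/-- `B` is the Gröbner basis of the subspace `F` with respect to the path order `o` :
`B` spans `F` and each `r ∈ B` has a leading path `m` (with coefficient `1`, all other
paths of `supp r` being `<`-smaller) whose coefficient in every other element of `B`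
vanishes. -/
def IsGB (o : Q.PathOrder) (F : Submodule k (List Q.A →₀ k))
    (B : Set (List Q.A →₀ k)) : Prop :=
  B ⊆ (F : Set (List Q.A →₀ k)) ∧ Submodule.span k B = F ∧
  ∀ r ∈ B, ∃ m, m ∈ (r : List Q.A →₀ k).support ∧ r m = 1 ∧
    (∀ p ∈ (r : List Q.A →₀ k).support, p ≠ m → o.lt p m) ∧
    ∀ r' ∈ B, r' ≠ r → (r' : List Q.A →₀ k) m = 0

end Linear

/-!
Every transvection `φ_j = φ_{α_j,u_j,τ_j}` moves only the arrow `α_j`, and `α_j` occurs in no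
earlier path `u_i`, `i < j`. Indeed, if `α_j` occurred in `u_i`, substituting each bypass of
`α_j` for that occurrence would inject the bypasses of `α_j` into those of `α_i` other than
`u_i`, so `W(α_j) < W(α_i)` and hence `α_j < α_i`, against `(α_i,u_i) < (α_j,u_j)`. (This
needs the sets of bypasses to be finite, which holds because paths in a finite acyclic quiver
have bounded length; otherwise `W`, a `Nat.card`, would be `0`.) So `φ_j` fixes the terms
`τ_i u_i` produced before it, and the images of an arrow simply add up. The normal-form
claims are the strictness of the bypass order.
-/

section Paths

variable {Q : Quiv}

lemma isPath_singleton (a : Q.A) : Q.IsPath [a] :=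
  ⟨List.cons_ne_nil a [], List.isChain_singleton a⟩

lemma src_append (p q : List Q.A) : Q.src (p ++ q) = (Q.src p).or (Q.src q) := by
  simp only [src, List.head?_append, Option.map_or]

lemma tgt_append (p q : List Q.A) : Q.tgt (p ++ q) = (Q.tgt q).or (Q.tgt p) := by
  simp only [tgt, List.getLast?_append, Option.map_or]

lemma isChain_append_iff (p q : List Q.A) :
    (p ++ q).IsChain (fun a b => Q.t a = Q.s b) ↔
      p.IsChain (fun a b => Q.t a = Q.s b) ∧ q.IsChain (fun a b => Q.t a = Q.s b) ∧
        ∀ x ∈ Q.tgt p, ∀ y ∈ Q.src q, x = y := by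
  simp [List.isChain_append, tgt, src]

lemma IsPath.replace {l₁ m m' l₂ : List Q.A} (h : Q.IsPath (l₁ ++ m ++ l₂))
    (hm' : Q.IsPath m') (hs : Q.src m' = Q.src m) (ht : Q.tgt m' = Q.tgt m) :
    Q.IsPath (l₁ ++ m' ++ l₂) := by
  refine ⟨by simp [hm'.1], ?_⟩
  obtain ⟨-, h⟩ := h
  change List.IsChain _ _ at h ⊢
  rw [List.append_assoc, isChain_append_iff, isChain_append_iff] at h ⊢
  rw [src_append, hs, ← src_append, ht]
  exact ⟨h.1, ⟨hm'.2, h.2.1.2⟩, h.2.2⟩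

lemma isPath_cons {b : Q.A} {l : List Q.A} (hl : l ≠ []) :
    Q.IsPath (b :: l) ↔ Q.IsPath l ∧ Q.src l = some (Q.t b) := by
  obtain ⟨c, l, rfl⟩ := List.exists_cons_of_ne_nil hl
  simp only [IsPath, src, List.Chain', List.isChain_cons_cons, List.head?_cons, Option.map_some,
    Option.some.injEq, ne_eq, reduceCtorEq, not_false_eq_true, true_and]
  tauto

lemma IsPath.of_append_left {p q : List Q.A} (h : Q.IsPath (p ++ q)) (hp : p ≠ []) :
    Q.IsPath p :=
  ⟨hp, ((isChain_append_iff p q).1 h.2).1⟩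

lemma IsPath.nodup_map_t (hnc : Q.NoCycle) {p : List Q.A} (hp : Q.IsPath p) :
    (p.map Q.t).Nodup := by
  induction p with
  | nil => simp
  | cons b l ih =>
    rcases eq_or_ne l [] with rfl | hl
    · simp
    obtain ⟨hl', hsrc⟩ := (isPath_cons hl).1 hp
    refine List.nodup_cons.2 ⟨?_, ih hl'⟩
    simp only [List.mem_map, not_exists, not_and]
    rintro c hc htc
    obtain ⟨l₁, l₂, rfl⟩ := List.append_of_mem hc
    have hpre : Q.IsPath (l₁ ++ [c]) := by
      apply IsPath.of_append_left (q := l₂) _ (by simp)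
      simpa using hl'
    apply hnc _ hpre
    rw [src_append, show Q.src [c] = Q.src (c :: l₂) from rfl, ← src_append, hsrc, ← htc]
    simp [tgt]

lemma finite_setOf_isPath [Finite Q.V] [Finite Q.A] (hnc : Q.NoCycle) :
    {p | Q.IsPath p}.Finite := by
  have := Fintype.ofFinite Q.V
  refine (List.finite_length_le Q.A (Fintype.card Q.V)).subset fun p hp => ?_
  simpa using (IsPath.nodup_map_t hnc hp).length_le_card

end Paths

section Bypasses

variable {Q : Quiv}

lemma IsBypass.two_le_length (hnm : Q.NoMultipleArrows) {α : Q.A} {u : List Q.A}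
    (hu : Q.IsBypass α u) : 2 ≤ u.length := by
  obtain ⟨⟨hne, -⟩, hs, ht, hα⟩ := hu
  match u with
  | [] => exact absurd rfl hne
  | [b] =>
    simp only [src, tgt, List.head?_singleton, List.getLast?_singleton, Option.map_some,
      Option.some.injEq] at hs ht
    exact absurd (by rw [hnm b α hs ht]) hα
  | _ :: _ :: _ => simp

lemma IsBypass.replace (hnm : Q.NoMultipleArrows) {α β : Q.A} {l₁ l₂ v : List Q.A}
    (hu : Q.IsBypass α (l₁ ++ β :: l₂)) (hv : Q.IsBypass β v) :
    Q.IsBypass α (l₁ ++ v ++ l₂) := by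
  have hv2 := hv.two_le_length hnm
  obtain ⟨hvp, hvs, hvt, -⟩ := hv
  have hs : Q.src v = Q.src [β] := hvs
  have ht : Q.tgt v = Q.tgt [β] := hvt
  obtain ⟨hup, hus, hut, -⟩ := hu
  rw [← List.singleton_append, ← List.append_assoc] at hup hus hut
  refine ⟨hup.replace hvp hs ht, ?_, ?_, ?_⟩
  · rwa [src_append, src_append, hs, ← src_append, ← src_append]
  · rwa [tgt_append, tgt_append, ht, ← tgt_append, ← tgt_append]
  · intro h
    have := congrArg List.length h
    simp only [List.length_append, List.length_singleton] at this
    omega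

lemma finite_bypasses [Finite Q.V] [Finite Q.A] (hnc : Q.NoCycle) (α : Q.A) :
    Finite {u // Q.IsBypass α u} :=
  ((finite_setOf_isPath hnc).subset fun _ hu => hu.1).to_subtype

lemma IsBypass.wa_lt_of_mem [Finite Q.V] [Finite Q.A] (hnc : Q.NoCycle)
    (hnm : Q.NoMultipleArrows) {α β : Q.A} {u : List Q.A} (hu : Q.IsBypass α u)
    (hβ : β ∈ u) : Q.Wa β < Q.Wa α := by
  obtain ⟨l₁, l₂, rfl⟩ := List.append_of_mem hβ
  have := finite_bypasses hnc α
  have := finite_bypasses hnc β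
  have := Fintype.ofFinite {u // Q.IsBypass α u}
  have := Fintype.ofFinite {u // Q.IsBypass β u}
  let f : {v // Q.IsBypass β v} → {w // Q.IsBypass α w} :=
    fun v => ⟨l₁ ++ v.1 ++ l₂, hu.replace hnm v.2⟩
  have hf : Function.Injective f := fun v w h =>
    Subtype.ext (by simpa [f] using congrArg Subtype.val h)
  have hu_notMem : ∀ v, f v ≠ ⟨_, hu⟩ := fun ⟨v, hv⟩ h => by
    have := congrArg (List.length ∘ Subtype.val) h
    simp only [f, Function.comp_apply, List.length_append, List.length_cons] at this
    have := hv.two_le_length hnm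
    omega
  simpa only [Wa, Nat.card_eq_fintype_card] using
    Fintype.card_lt_of_injective_of_notMem f hf (by simpa using hu_notMem)

lemma IsBypass.lt_of_mem [Finite Q.V] [Finite Q.A] (hnc : Q.NoCycle)
    (hnm : Q.NoMultipleArrows) (o : Q.PathOrder) {α β : Q.A} {u : List Q.A}
    (hu : Q.IsBypass α u) (hβ : β ∈ u) : o.lt [β] [α] :=
  o.wlt _ _ (isPath_singleton β) (isPath_singleton α) <| by
    simpa [Wp] using hu.wa_lt_of_mem hnc hnm hβ

lemma IsBypass.notMem_of_bplt [Finite Q.V] [Finite Q.A] (hnc : Q.NoCycle)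
    (hnm : Q.NoMultipleArrows) (o : Q.PathOrder) {α β : Q.A} {u v : List Q.A}
    (hu : Q.IsBypass α u) (h : o.bplt (α, u) (β, v)) : β ∉ u := by
  intro hβ
  have hβα := hu.lt_of_mem hnc hnm o hβ
  rcases h with hαβ | ⟨rfl, -⟩
  · exact o.irrefl _ (isPath_singleton α) (o.trans' _ _ _ hαβ hβα)
  · exact o.irrefl _ (isPath_singleton α) hβα

lemma PathOrder.ne_of_bplt (o : Q.PathOrder) {b c : Q.A × List Q.A} (hc : Q.IsPath c.2)
    (h : o.bplt b c) : b ≠ c := by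
  rintro rfl
  rcases h with h | ⟨-, h⟩
  · exact o.irrefl _ (isPath_singleton _) h
  · exact o.irrefl _ hc h

end Bypasses

section Transvections

variable {Q : Quiv} {k : Type} [Field k]

lemma mulF_single (p q : List Q.A) (c d : k) :
    mulF Q k (Finsupp.single p c) (Finsupp.single q d) = Finsupp.single (p ++ q) (c * d) := by
  simp [mulF]

lemma mulF_single_nil (f : List Q.A →₀ k) : mulF Q k f (Finsupp.single [] 1) = f := by
  simp only [mulF, Finsupp.sum_single_index, mul_zero, Finsupp.single_zero, List.append_nil,
    mul_one, Finsupp.sum_single]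

lemma substPoly_of_notMem {α : Q.A} (u : List Q.A) (τ : k) {p : List Q.A} (hp : α ∉ p) :
    substPoly Q k α u τ p = Finsupp.single p 1 := by
  induction p with
  | nil => rfl
  | cons b p ih =>
    rw [List.mem_cons, not_or] at hp
    rw [substPoly, ih hp.2, arrowImg, if_neg (Ne.symm hp.1), mulF_single, one_mul,
      List.singleton_append]

lemma substMap_single_of_notMem {α : Q.A} (u : List Q.A) (τ : k) {p : List Q.A}
    (hp : α ∉ p) : substMap Q k α u τ (Finsupp.single p 1) = Finsupp.single p 1 := by
  rw [substMap, Finsupp.linearCombination_single, one_smul, substPoly_of_notMem u τ hp]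

lemma substMap_single_arrow (α : Q.A) (u : List Q.A) (τ : k) (b : Q.A) :
    substMap Q k α u τ (Finsupp.single [b] 1) = arrowImg Q k α u τ b := by
  rw [substMap, Finsupp.linearCombination_single, one_smul, substPoly, substPoly,
    mulF_single_nil]

lemma prod_substMap_single_arrow (a : ℕ → Q.A) (u : ℕ → List Q.A) (τ : ℕ → k) (n : ℕ)
    (h : ∀ i j, i < j → j < n → a j ∉ u i) (α : Q.A) :
    (((List.range n).map fun i => substMap Q k (a i) (u i) (τ i)).reverse).prod
        (Finsupp.single [α] 1) =
      Finsupp.single [α] 1 +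
        ∑ i ∈ (Finset.range n).filter (fun i => a i = α), τ i • Finsupp.single (u i) 1 := by
  induction n with
  | zero => simp
  | succ n ih =>
    rw [List.range_succ, List.map_append, List.reverse_append, List.prod_append,
      List.map_singleton, List.reverse_singleton, List.prod_singleton, Module.End.mul_apply,
      ih fun i j hij hj => h i j hij (by omega), map_add, map_sum, substMap_single_arrow]
    have hfix : ∀ i ∈ (Finset.range n).filter (fun i => a i = α),
        substMap Q k (a n) (u n) (τ n) (τ i • Finsupp.single (u i) 1) =
          τ i • Finsupp.single (u i) 1 := fun i hi => by
      rw [map_smul, substMap_single_of_notMem _ _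
        (h i n (Finset.mem_range.1 (Finset.mem_filter.1 hi).1) n.lt_add_one)]
    rw [Finset.sum_congr rfl hfix, Finset.range_add_one, Finset.filter_insert, arrowImg]
    by_cases hn : a n = α
    · rw [if_pos hn.symm, if_pos hn, Finset.sum_insert (by simp), add_assoc]
    · rw [if_neg (Ne.symm hn), if_neg hn]

end Transvections

theorem stmt_10_general (Q : Quiv) [Fintype Q.V] [Fintype Q.A]
    (k : Type) [Field k]
    (hnc : Q.NoCycle) (hnm : Q.NoMultipleArrows) (o : Q.PathOrder)
    (n : ℕ) (a : ℕ → Q.A) (u : ℕ → List Q.A) (τ : ℕ → k)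
    (hb : ∀ i < n, Q.IsBypass (a i) (u i))
    (hmono : ∀ i j, i < j → j < n → o.bplt (a i, u i) (a j, u j))
    (ψ : Module.End k (List Q.A →₀ k))
    (hψ : ψ = (((List.range n).map fun i => substMap Q k (a i) (u i) (τ i)).reverse).prod) :
    ∀ α : Q.A,
      ψ (Finsupp.single [α] (1 : k)) =
        Finsupp.single [α] 1 +
          ∑ i ∈ (Finset.range n).filter (fun i => a i = α),
            τ i • Finsupp.single (u i) 1 ∧
      (∀ i j, i < n → j < n → a i = α → a j = α → i ≠ j → u i ≠ u j) ∧
      (∀ i < n, a i = α → u i ≠ [α]) := by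
  intro α
  subst hψ
  have hdistinct : ∀ i j, i < j → j < n → (a i, u i) ≠ (a j, u j) := fun i j hij hj =>
    o.ne_of_bplt (hb j hj).1 (hmono i j hij hj)
  have hnotMem : ∀ i j, i < j → j < n → a j ∉ u i := fun i j hij hj =>
    (hb i (hij.trans hj)).notMem_of_bplt hnc hnm o (hmono i j hij hj)
  refine ⟨prod_substMap_single_arrow a u τ n hnotMem α, ?_, ?_⟩
  · intro i j hi hj hai haj hij huij
    rcases hij.lt_or_gt with hij | hij
    · exact hdistinct i j hij hj (by rw [hai, haj, huij])
    · exact hdistinct j i hij hi (by rw [hai, haj, huij])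
  · rintro i hi rfl
    exact (hb i hi).2.2.2

/-- Let `(α_1,u_1) < ⋯ < (α_n,u_n)` be a strictly increasing sequence of
bypasses, let `τ_1,…,τ_n ∈ k^*`, and set `ψ := φ_{α_n,u_n,τ_n} ∘ ⋯ ∘ φ_{α_1,u_1,τ_1}`.
Then for every arrow `α`, `ψ(α) = α + Σ_{i, α_i = α} τ_i u_i`, and this expression is a
normal form: the paths `u_i` with `α_i = α` are pairwise distinct and distinct from `α`.
(Indices run over `0,…,n-1`.) -/
theorem stmt_10 (Q : Quiv) [Fintype Q.V] [Fintype Q.A]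
    (k : Type) [Field k] [IsAlgClosed k]
    (hnc : Q.NoCycle) (hnm : Q.NoMultipleArrows) (o : Q.PathOrder)
    (n : ℕ) (a : ℕ → Q.A) (u : ℕ → List Q.A) (τ : ℕ → k)
    (hb : ∀ i < n, Q.IsBypass (a i) (u i))
    (hτ : ∀ i < n, τ i ≠ 0)
    (hmono : ∀ i j, i < j → j < n → o.bplt (a i, u i) (a j, u j))
    (ψ : Module.End k (List Q.A →₀ k))
    (hψ : ψ = (((List.range n).map fun i => substMap Q k (a i) (u i) (τ i)).reverse).prod) :
    ∀ α : Q.A,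
      ψ (Finsupp.single [α] (1 : k)) =
        Finsupp.single [α] 1 +
          ∑ i ∈ (Finset.range n).filter (fun i => a i = α),
            τ i • Finsupp.single (u i) 1 ∧
      (∀ i j, i < n → j < n → a i = α → a j = α → i ≠ j → u i ≠ u j) ∧
      (∀ i < n, a i = α → u i ≠ [α]) :=
  stmt_10_general Q k hnc hnm o n a u τ hb hmono ψ hψ

end Quiv
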